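/- Fix k ≥ 1 and n ≥ 2, and consider the Algorithm 3 transition system restricted to steps (R1), (R2), (R3). Let the initial configuration c₀ have agent 0 in state (some s₀, some ρ₀, S) and every agent j ≠ 0 in state (some s_j, some ρ_j, u). Suppose c is reachable from c₀ using only steps (R1)–(R3), and in c exactly one agent has label S while every other agent has label ū. Then the S-labeled agent in c has secret some (∑_{j ∈ Fin n} s_j), the sum taken in ZMod k. -/

import Mathlib

/-- Labels of Algorithm 3. -/
inductive Alg3.Label : Type
  | S | S' | R | u | ubar
deriving DecidableEq

/-- Agent state of Algorithm 3: a secret, a mask, and a label. -/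
structure Alg3.AgentState (k : ℕ) : Type where
  secret : Option (ZMod k)
  mask : Option (ZMod k)
  label : Alg3.Label

/-- A configuration: the state of each of the `n` agents. -/
abbrev Alg3.Config (k n : ℕ) : Type := Fin n → Alg3.AgentState k

open Alg3 in
/-- A single step of Algorithm 3 restricted to the rules (R1), (R2), (R3), between a
distinct initiator `i` and responder `j`. -/
inductive Alg3.StepR (k n : ℕ) : Config k n → Config k n → Prop
  | r1 (c : Config k n) (i j : Fin n) (hij : i ≠ j) (σ : Option (ZMod k)) (r r' : ZMod k)
      (hi : c i = ⟨σ, some r, Label.S⟩) (hj : (c j).label = Label.ubar) :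
      StepR k n c (Function.update c i ⟨σ, some r', Label.S⟩)
  | r2 (c : Config k n) (i j : Fin n) (hij : i ≠ j) (μ r v : ZMod k) (ρj : Option (ZMod k))
      (hi : c i = ⟨some μ, some r, Label.S⟩) (hj : c j = ⟨some v, ρj, Label.u⟩) :
      StepR k n c (Function.update (Function.update c i ⟨none, some (μ - r), Label.S'⟩)
        j ⟨some (v + r), ρj, Label.R⟩)
  | r3 (c : Config k n) (i j : Fin n) (hij : i ≠ j) (x y : ZMod k) (ρj : Option (ZMod k))
      (hi : c i = ⟨none, some x, Label.S'⟩) (hj : c j = ⟨some y, ρj, Label.R⟩) :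
      StepR k n c (Function.update (Function.update c i ⟨none, none, Label.ubar⟩)
        j ⟨some (x + y), ρj, Label.S⟩)

/-- Reachability using only steps (R1)–(R3). -/
def Alg3.ReachableR (k n : ℕ) : Alg3.Config k n → Alg3.Config k n → Prop :=
  Relation.ReflTransGen (Alg3.StepR k n)

/-! Value is only moved between agents: (R1) touches a mask the sender does not count, (R2)
shifts `r` from the sender's secret to the responder's, and (R3) hands the remainder `μ - r`
to the responder. So the sum of the agents' contributions (secret, or the remainder for an `S'`
agent, or nothing for a `ū` agent) is conserved, and when a single `S` agent is left it holds
the whole sum, a secret being present because every `S` agent ever created carries one. -/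

namespace Alg3

variable {k n : ℕ}

def AgentState.contribution (a : AgentState k) : ZMod k :=
  match a.label with
  | Label.S' => a.mask.getD 0
  | Label.ubar => 0
  | _ => a.secret.getD 0

def total (c : Config k n) : ZMod k :=
  ∑ x, (c x).contribution

lemma total_update (c : Config k n) (i : Fin n) (a : AgentState k) :
    total (Function.update c i a) = total c - (c i).contribution + a.contribution := by
  have hcomp : (fun x => (Function.update c i a x).contribution)
      = Function.update (fun x => (c x).contribution) i a.contribution :=
    funext fun x => Function.apply_update (fun _ z => AgentState.contribution z) c i a x
  rw [total, total, hcomp, Finset.sum_update_of_mem (Finset.mem_univ i),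
    Finset.sdiff_singleton_eq_erase, ← Finset.add_sum_erase _ _ (Finset.mem_univ i)]
  ring

lemma StepR.total_eq {c c' : Config k n} (h : StepR k n c c') : total c' = total c := by
  cases h with
  | r1 i _ _ _ _ _ hi _ =>
    rw [total_update, hi]
    simp [AgentState.contribution]
  | r2 i j hij μ r v ρj hi hj =>
    rw [total_update, total_update, Function.update_of_ne hij.symm, hi, hj]
    simp only [AgentState.contribution, Option.getD_some]
    ring
  | r3 i j hij x y ρj hi hj =>
    rw [total_update, total_update, Function.update_of_ne hij.symm, hi, hj]
    simp only [AgentState.contribution, Option.getD_some]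
    ring

lemma ReachableR.total_eq {c₀ c : Config k n} (h : ReachableR k n c₀ c) : total c = total c₀ := by
  induction h with
  | refl => rfl
  | tail _ hstep ih => exact hstep.total_eq.trans ih

def SendersHaveSecrets (c : Config k n) : Prop :=
  ∀ a, (c a).label = Label.S → (c a).secret.isSome

lemma StepR.sendersHaveSecrets {c c' : Config k n} (h : StepR k n c c')
    (hc : SendersHaveSecrets c) : SendersHaveSecrets c' := by
  intro a ha
  cases h with
  | r1 i _ _ _ _ _ hi _ =>
    rcases eq_or_ne a i with rfl | hai
    · simpa [hi] using hc a (by rw [hi])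
    · rw [Function.update_of_ne hai] at ha ⊢
      exact hc a ha
  | r2 i j _ _ _ _ _ _ _ =>
    rcases eq_or_ne a j with rfl | haj
    · simp
    rw [Function.update_of_ne haj] at ha ⊢
    rcases eq_or_ne a i with rfl | hai
    · simp at ha
    rw [Function.update_of_ne hai] at ha ⊢
    exact hc a ha
  | r3 i j _ _ _ _ _ _ =>
    rcases eq_or_ne a j with rfl | haj
    · simp
    rw [Function.update_of_ne haj] at ha ⊢
    rcases eq_or_ne a i with rfl | hai
    · simp at ha
    rw [Function.update_of_ne hai] at ha ⊢
    exact hc a ha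

lemma ReachableR.sendersHaveSecrets {c₀ c : Config k n} (h : ReachableR k n c₀ c)
    (hc₀ : SendersHaveSecrets c₀) : SendersHaveSecrets c := by
  induction h with
  | refl => exact hc₀
  | tail _ hstep ih => exact hstep.sendersHaveSecrets ih

lemma total_of_unique_sender {c : Config k n} {i : Fin n} (hiS : (c i).label = Label.S)
    (hother : ∀ j, j ≠ i → (c j).label = Label.ubar) : total c = (c i).secret.getD 0 := by
  rw [total, Fintype.sum_eq_single i fun j hj => by simp [AgentState.contribution, hother j hj]]
  simp [AgentState.contribution, hiS]

end Alg3

open Alg3 in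
theorem stmt14_general (k n : ℕ)
    (s ρ : Fin n → ZMod k) (c₀ c : Config k n)
    (lead : Fin n)
    (h0 : c₀ lead = ⟨some (s lead), some (ρ lead), Label.S⟩)
    (hrest : ∀ j : Fin n, j ≠ lead → c₀ j = ⟨some (s j), some (ρ j), Label.u⟩)
    (hreach : ReachableR k n c₀ c)
    (i : Fin n) (hiS : (c i).label = Label.S)
    (hother : ∀ j : Fin n, j ≠ i → (c j).label = Label.ubar) :
    (c i).secret = some (∑ j : Fin n, s j) := by
  have hinit : ∀ j, c₀ j = ⟨some (s j), some (ρ j), if j = lead then Label.S else Label.u⟩ := by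
    intro j
    split_ifs with hj
    · exact hj ▸ h0
    · exact hrest j hj
  have hsenders : SendersHaveSecrets c₀ := fun j _ => by simp [hinit j]
  have htotal : total c₀ = ∑ j, s j :=
    Finset.sum_congr rfl fun j _ => by
      rw [hinit j]; split_ifs <;> rfl
  obtain ⟨m, hm⟩ := Option.isSome_iff_exists.mp (hreach.sendersHaveSecrets hsenders i hiS)
  have hfinal := total_of_unique_sender hiS hother
  rw [hreach.total_eq, htotal, hm, Option.getD_some] at hfinal
  rw [hm, hfinal]

open Alg3 in
/-- If initially agent `0` is the Sender with secret `s 0` and every other agent `j` has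
secret `s j` and label `u`, then in any configuration reachable via (R1)–(R3) in which
exactly one agent is labeled `S` and all others are labeled `ū`, the `S`-labeled agent's
secret is `some (∑ j, s j)`, the sum taken in `ZMod k`. -/
theorem stmt14 (k n : ℕ) (hk : 1 ≤ k) (hn : 2 ≤ n)
    (s ρ : Fin n → ZMod k) (c₀ c : Config k n)
    (lead : Fin n) (hlead : (lead : ℕ) = 0)
    (h0 : c₀ lead = ⟨some (s lead), some (ρ lead), Label.S⟩)
    (hrest : ∀ j : Fin n, j ≠ lead → c₀ j = ⟨some (s j), some (ρ j), Label.u⟩)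
    (hreach : ReachableR k n c₀ c)
    (i : Fin n) (hiS : (c i).label = Label.S)
    (hother : ∀ j : Fin n, j ≠ i → (c j).label = Label.ubar) :
    (c i).secret = some (∑ j : Fin n, s j) :=
  stmt14_general k n s ρ c₀ c lead h0 hrest hreach i hiS hother
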